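/- arXiv:1005.1521 — 2 statements merged into one kernel-verified Lean document; each statement's English description precedes it below -/
import Mathlib

section
/- The number of bilateral Dyck paths of length 2n with exactly v+1 peaks (with boundary convention) equals C(n,v)^2, for 0 ≤ v ≤ n-1 and n ≥ 1. -/
open Finset
open scoped Classical

/-- Extend a finite step sequence to ℕ (false outside range). -/
def extS {m : ℕ} (s : Fin m → Bool) : ℕ → Bool :=
  fun j => if h : j < m then s ⟨j, h⟩ else false

/-- Number of up-steps (true entries) among the first `k` steps. -/
def upsTo {m : ℕ} (s : Fin m → Bool) (k : ℕ) : ℕ :=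
  ((Finset.range k).filter (fun j => extS s j = true)).card

/-- A bilateral Dyck path of length 2n: a ±1-sequence with sum 0,
encoded as a Bool sequence with exactly n `true`s. -/
def isBilateral (n : ℕ) (s : Fin (2*n) → Bool) : Prop := upsTo s (2*n) = n

/-- A Dyck path of length 2n: sum 0 and all partial sums nonnegative
(`k ≤ 2 * upsTo s k` says #ups ≥ #downs among the first k steps). -/
def isDyck (n : ℕ) (s : Fin (2*n) → Bool) : Prop :=
  upsTo s (2*n) = n ∧ ∀ k ≤ 2*n, k ≤ 2 * upsTo s k

/-- Interior peaks: 1-indexed positions i (1 ≤ i ≤ m-1) with step i up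
and step i+1 down; 0-indexed j = i-1 ranges over `range (m-1)`. -/
def interiorPeaks {m : ℕ} (s : Fin m → Bool) : ℕ :=
  ((Finset.range (m-1)).filter (fun j => extS s j = true ∧ extS s (j+1) = false)).card

/-- Peaks with the boundary convention: the initial vertex is a peak if the
first step is down, the final vertex is a peak if the last step is up. -/
def bPeaks (n : ℕ) (s : Fin (2*n) → Bool) : ℕ :=
  interiorPeaks s + (if extS s 0 = false then 1 else 0)
    + (if extS s (2*n-1) = true then 1 else 0)

/-- Number of up-steps at even 1-indexed positions (odd 0-indexed). -/
def evenUps (n : ℕ) (s : Fin (2*n) → Bool) : ℕ :=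
  ((Finset.range (2*n)).filter (fun j => j % 2 = 1 ∧ extS s j = true)).card

/-- Number of up-steps at odd 1-indexed positions (even 0-indexed). -/
def oddUps (n : ℕ) (s : Fin (2*n) → Bool) : ℕ :=
  ((Finset.range (2*n)).filter (fun j => j % 2 = 0 ∧ extS s j = true)).card

/-- Number of ones (arrows) in a Boolean sequence. -/
def ones {m : ℕ} (f : Fin m → Bool) : ℕ := upsTo f m

/-- 1-indexed position of the h-th one in `f`: the least `k` such that the
first `k` entries contain exactly `h` ones. -/
noncomputable def nthOnePos {m : ℕ} (f : Fin m → Bool) (h : ℕ) : ℕ := sInf {k | upsTo f k = h}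

/-- A checkmark pair of size n. -/
def isCheckPair (n : ℕ) (p : (Fin n → Bool) × (Fin (n-1) → Bool)) : Prop :=
  ones p.1 = ones p.2 ∨ ones p.1 = ones p.2 + 1

/-- A Dyck checkmark pair of size n. -/
def isDyckCheckPair (n : ℕ) (p : (Fin n → Bool) × (Fin (n-1) → Bool)) : Prop :=
  isCheckPair n p ∧ ∀ h, 1 ≤ h → h ≤ ones p.2 → nthOnePos p.2 h < nthOnePos p.1 h

/-- Narayana number N(n,v) = C(n,v)C(n-1,v)/(v+1). -/
def narayana (n v : ℕ) : ℕ := n.choose v * (n-1).choose v / (v + 1)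

/-- The bijection φ: s_NW(i) = 1 iff step 2i-1 (1-indexed) is down;
s_SW(i) = 1 iff step 2i (1-indexed) is up. -/
def phiMap (n : ℕ) (s : Fin (2*n) → Bool) : (Fin n → Bool) × (Fin (n-1) → Bool) :=
  (fun i => ! extS s (2*(i:ℕ)), fun i => extS s (2*(i:ℕ)+1))

/-- Height (#ups − #downs) before step j (0-indexed). -/
def height {m : ℕ} (s : Fin m → Bool) (j : ℕ) : ℤ := 2 * (upsTo s j : ℤ) - j

/-- Step j lies in an odd band: an up-step from even height, or a down-step
from odd height. -/
def inOddBand {m : ℕ} (s : Fin m → Bool) (j : ℕ) : Prop :=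
  (extS s j = true ∧ Even (height s j)) ∨ (extS s j = false ∧ Odd (height s j))

/-!
Framing a bilateral path `s` as `U s D` turns the two boundary peaks into ordinary `UD` factors.
A word that starts with `U`, ends with `D` and has `p + 1` up-steps, `q + 1` down-steps and
`k + 1` peaks is `U^{a₀} D^{b₀} ⋯ U^{aₖ} D^{bₖ}` with all exponents positive, so there are
`C(p, k) * C(q, k)` of them; for `p = q = n` this is `C(n, v) ^ 2`. The count follows from the
recursion on the first step of `s`, jointly with the companion count for paths framed as `D s D`,
by Pascal's rule.
-/

lemma card_filter_fin_cons {α : Type*} [Fintype α] {m : ℕ} (P : (Fin (m + 1) → α) → Prop)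
    [DecidablePred P] :
    #{s | P s} = ∑ b, #{t : Fin m → α | P (Fin.cons b t)} := by
  simp only [card_filter]
  rw [← (Fin.consEquiv fun _ => α).sum_comp, Fintype.sum_prod_type]
  rfl

section FramedPeaks

variable {m : ℕ}

@[simp] lemma extS_cons_zero (b : Bool) (t : Fin m → Bool) :
    extS (Fin.cons b t : Fin (m + 1) → Bool) 0 = b := by
  simp [extS]

@[simp] lemma extS_cons_succ (b : Bool) (t : Fin m → Bool) (j : ℕ) :
    extS (Fin.cons b t : Fin (m + 1) → Bool) (j + 1) = extS t j := by
  by_cases hj : j < m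
  · simp [extS, hj, ← Fin.succ_mk]
  · simp [extS, hj]

lemma extS_of_le (s : Fin m → Bool) {j : ℕ} (hj : m ≤ j) : extS s j = false :=
  dif_neg (by omega)

lemma upsTo_cons (b : Bool) (t : Fin m → Bool) :
    upsTo (Fin.cons b t : Fin (m + 1) → Bool) (m + 1) = upsTo t m + b.toNat := by
  simp only [upsTo, card_filter, sum_range_succ', extS_cons_succ, extS_cons_zero]
  cases b <;> rfl

/-- Peaks of the path `a s D`: the step `a` is prepended and a down-step appended. -/
def framedPeaks (a : Bool) (s : Fin m → Bool) : ℕ :=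
  (if a = true ∧ extS s 0 = false then 1 else 0) +
    #{j ∈ range m | extS s j = true ∧ extS s (j + 1) = false}

lemma framedPeaks_cons (a b : Bool) (t : Fin m → Bool) :
    framedPeaks a (Fin.cons b t : Fin (m + 1) → Bool) =
      (if a = true ∧ b = false then 1 else 0) + framedPeaks b t := by
  simp only [framedPeaks, card_filter, sum_range_succ', extS_cons_succ, extS_cons_zero]
  ring

lemma interiorPeaks_add_ite_last (s : Fin m → Bool) :
    interiorPeaks s + (if extS s (m - 1) = true then 1 else 0) =
      #{j ∈ range m | extS s j = true ∧ extS s (j + 1) = false} := by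
  cases m with
  | zero => simp [interiorPeaks, extS]
  | succ m =>
    rw [interiorPeaks, Nat.add_sub_cancel, card_filter, card_filter, sum_range_succ,
      extS_of_le s le_rfl]
    simp

lemma bPeaks_eq_framedPeaks (n : ℕ) (s : Fin (2 * n) → Bool) :
    bPeaks n s = framedPeaks true s := by
  rw [bPeaks, framedPeaks, ← interiorPeaks_add_ite_last]
  simp only [true_and]
  ring

end FramedPeaks

def pathCount (m p k : ℕ) (a : Bool) : ℕ :=
  #{s : Fin m → Bool | upsTo s m = p ∧ framedPeaks a s = k}

lemma pathCount_zero (p k : ℕ) (a : Bool) :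
    pathCount 0 p k a = if p = 0 ∧ k = a.toNat then 1 else 0 := by
  simp only [pathCount, univ_unique, filter_singleton]
  cases a <;> simp [upsTo, framedPeaks, extS, eq_comm] <;> split_ifs <;> rfl

lemma pathCount_succ (m p k : ℕ) (a : Bool) :
    pathCount (m + 1) p k a =
      (if a.toNat ≤ k then pathCount m p (k - a.toNat) false else 0) +
        (if 1 ≤ p then pathCount m (p - 1) k true else 0) := by
  rw [pathCount, card_filter_fin_cons, Fintype.sum_bool]
  simp only [upsTo_cons, framedPeaks_cons, Bool.toNat_true, Bool.toNat_false, add_zero,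
    Bool.true_eq_false, and_false, and_true, if_false, zero_add]
  rw [add_comm]
  congr 1
  · cases a
    · simp [pathCount]
    · rcases k with _ | k
      · simp
      · simp [pathCount, add_comm 1]
  · rcases p with _ | p
    · simp
    · simp [pathCount]

lemma pathCount_eq_zero_of_lt {m p : ℕ} (h : m < p) (k : ℕ) (a : Bool) :
    pathCount m p k a = 0 := by
  refine card_eq_zero.2 (filter_eq_empty_iff.2 fun s _ ⟨hs, _⟩ => ?_)
  have : upsTo s m ≤ m := (card_filter_le _ _).trans (card_range m).le
  omega

lemma pathCount_true_no_peaks (m p : ℕ) : pathCount m p 0 true = 0 := by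
  induction m generalizing p with
  | zero => simp [pathCount_zero]
  | succ m ih => simp [pathCount_succ, ih]

lemma pathCount_false_no_peaks (m p : ℕ) : pathCount m (p + 1) 0 false = 0 := by
  induction m with
  | zero => simp [pathCount_zero]
  | succ m ih => simp [pathCount_succ, ih, pathCount_true_no_peaks]

lemma pathCount_false_no_ups (m k : ℕ) :
    pathCount m 0 k false = if k = 0 then 1 else 0 := by
  induction m with
  | zero => simp [pathCount_zero]
  | succ m ih => simp [pathCount_succ, ih]

theorem pathCount_eq_choose_mul_choose (p q k : ℕ) :
    pathCount (p + q) p (k + 1) true = p.choose k * q.choose k ∧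
      pathCount (p + q) (p + 1) (k + 1) false = p.choose k * q.choose (k + 1) := by
  induction hm : p + q generalizing p q k with
  | zero =>
    obtain ⟨rfl, rfl⟩ : p = 0 ∧ q = 0 := by omega
    cases k <;> simp [pathCount_zero]
  | succ m ih =>
    rw [pathCount_succ, pathCount_succ]
    rcases q with _ | q
    · obtain rfl : p = m + 1 := by omega
      cases k <;> simp [pathCount_eq_zero_of_lt, ih m 0]
    rcases p with _ | p
    · obtain rfl : q = m := by omega
      cases k <;> simp [pathCount_false_no_ups, ih 0 q]
    have ih₁ := ih p (q + 1)
    have ih₂ := ih (p + 1) q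
    simp only [show p + (q + 1) = m by omega, show p + 1 + q = m by omega, forall_const] at ih₁ ih₂
    rcases k with _ | k
    · simp [pathCount_false_no_peaks, ih₁, ih₂]
    · simp [ih₁, ih₂, Nat.choose_succ_succ' p, Nat.choose_succ_succ' q]
      constructor <;> ring

theorem stmt1_general (n v : ℕ) :
    ((Finset.univ : Finset (Fin (2*n) → Bool)).filter
      (fun s => isBilateral n s ∧ bPeaks n s = v + 1)).card = (n.choose v) ^ 2 := by
  obtain ⟨h, -⟩ := pathCount_eq_choose_mul_choose n n v
  rw [← two_mul, ← sq] at h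
  rw [← h, pathCount]
  simp only [isBilateral, bPeaks_eq_framedPeaks]

theorem stmt1 (n v : ℕ) (hn : 1 ≤ n) (hv : v ≤ n - 1) :
    ((Finset.univ : Finset (Fin (2*n) → Bool)).filter
      (fun s => isBilateral n s ∧ bPeaks n s = v + 1)).card = (n.choose v) ^ 2 :=
  stmt1_general n v
end

section
/- The map taking a ±1-sequence s of length 2n with sum 0 to the pair (s_NW, s_SW), where s_NW is obtained by toggling the odd-indexed entries of s (up ↔ down, viewed as blank/arrow) and s_SW is the sequence of even-indexed entries of s with the last entry removed, is a bijection from bilateral Dyck paths of length 2n onto checkmark pairs of size n. -/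
open Finset
open scoped Classical

/-! `phiMap` forgets only the last step. Counting up-steps by parity, a path `s` of length `2n`
has `n - ones s_NW` up-steps at odd positions and `ones s_SW + [last step up]` at even ones, so `s`
is bilateral exactly when `ones s_NW = ones s_SW + [last step up]`. Thus a bilateral path is
recovered from its image, and a checkmark pair is the image of the path whose last step is up iff
`ones s_NW` exceeds `ones s_SW`. -/

lemma extS_of_lt {m : ℕ} (s : Fin m → Bool) {j : ℕ} (h : j < m) : extS s j = s ⟨j, h⟩ :=
  dif_pos h

lemma extS_fin {m : ℕ} (s : Fin m → Bool) (j : Fin m) : extS s j = s j :=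
  dif_pos j.isLt

lemma ones_eq_card_filter {m : ℕ} (f : Fin m → Bool) (P : ℕ → Prop) [DecidablePred P]
    (h : ∀ j < m, extS f j = true ↔ P j) : ones f = #{j ∈ range m | P j} :=
  congrArg card <| filter_congr fun j hj => h j (mem_range.mp hj)

lemma card_filter_range_succ (P : ℕ → Prop) [DecidablePred P] (k : ℕ) :
    #{i ∈ range (k + 1) | P i} = #{i ∈ range k | P i} + if P k then 1 else 0 := by
  simp only [← Nat.count_eq_card_filter_range, Nat.count_succ]

lemma card_filter_range_two_mul (P : ℕ → Prop) [DecidablePred P] (n : ℕ) :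
    #{j ∈ range (2 * n) | P j} = #{i ∈ range n | P (2 * i)} + #{i ∈ range n | P (2 * i + 1)} := by
  induction n with
  | zero => simp
  | succ n ih =>
    rw [show 2 * (n + 1) = 2 * n + 1 + 1 by ring, card_filter_range_succ, card_filter_range_succ,
      ih, card_filter_range_succ (fun i => P (2 * i)), card_filter_range_succ (fun i => P (2 * i + 1))]
    ring

section phiMap

variable {n : ℕ} (s : Fin (2 * n) → Bool)

lemma ones_phiMap_fst :
    ones (phiMap n s).1 = #{i ∈ range n | extS s (2 * i) = false} :=
  ones_eq_card_filter _ _ fun i hi => by simp [extS_of_lt _ hi, phiMap]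

lemma ones_phiMap_snd :
    ones (phiMap n s).2 = #{i ∈ range (n - 1) | extS s (2 * i + 1) = true} :=
  ones_eq_card_filter _ _ fun i hi => by simp [extS_of_lt _ hi, phiMap]

lemma upsTo_add_ones_phiMap_fst :
    upsTo s (2 * n) + ones (phiMap n s).1 = n + ones (phiMap n s).2 + (extS s (2 * n - 1)).toNat := by
  have h_ups : upsTo s (2 * n) = #{i ∈ range n | extS s (2 * i) = true}
      + #{i ∈ range n | extS s (2 * i + 1) = true} :=
    card_filter_range_two_mul (fun j => extS s j = true) n
  have h_odd : #{i ∈ range n | extS s (2 * i + 1) = true}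
      = ones (phiMap n s).2 + (extS s (2 * n - 1)).toNat := by
    rw [ones_phiMap_snd]
    cases n with
    | zero => simp [extS]
    | succ m =>
      rw [card_filter_range_succ, show 2 * (m + 1) - 1 = 2 * m + 1 by omega]
      cases extS s (2 * m + 1) <;> simp
  have h_even : #{i ∈ range n | extS s (2 * i) = true} + ones (phiMap n s).1 = n := by
    rw [ones_phiMap_fst]
    simpa using card_filter_add_card_filter_not (s := range n) (fun i => extS s (2 * i) = true)
  omega

lemma isBilateral_iff :
    isBilateral n s ↔ ones (phiMap n s).1 = ones (phiMap n s).2 + (extS s (2 * n - 1)).toNat := by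
  have := upsTo_add_ones_phiMap_fst s
  unfold isBilateral
  omega

lemma eq_of_phiMap_eq {s t : Fin (2 * n) → Bool} (h : phiMap n s = phiMap n t)
    (h_last : extS s (2 * n - 1) = extS t (2 * n - 1)) : s = t := by
  funext j
  rw [← extS_fin s j, ← extS_fin t j]
  obtain ⟨i, hi | hi⟩ := Nat.even_or_odd' j
  · have := congrFun (congrArg Prod.fst h) ⟨i, by omega⟩
    simpa [phiMap, hi] using this
  · by_cases hin : i < n - 1
    · have := congrFun (congrArg Prod.snd h) ⟨i, hin⟩
      simpa [phiMap, hi] using this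
    · rwa [show (j : ℕ) = 2 * n - 1 by omega]

-- For `n = 0` the index `2 * n - 1` truncates to `0`, where `extS` is `false`.
lemma exists_phiMap_eq_and_extS_eq (p : (Fin n → Bool) × (Fin (n - 1) → Bool)) (b : Bool)
    (hb : n = 0 → b = false) : ∃ s : Fin (2 * n) → Bool, phiMap n s = p ∧ extS s (2 * n - 1) = b := by
  refine ⟨fun j => if (j : ℕ) % 2 = 0 then !extS p.1 (j / 2)
    else if (j : ℕ) / 2 < n - 1 then extS p.2 (j / 2) else b, ?_, ?_⟩
  · refine Prod.ext (funext fun i => ?_) (funext fun i => ?_)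
    · have := i.isLt
      simp [phiMap, extS_of_lt _ (show 2 * (i : ℕ) < 2 * n by omega), extS_fin]
    · have := i.isLt
      simp [phiMap, extS_of_lt _ (show 2 * (i : ℕ) + 1 < 2 * n by omega), extS_fin, Nat.add_mod,
        show (2 * (i : ℕ) + 1) / 2 = i by omega, this]
  · rcases Nat.eq_zero_or_pos n with rfl | hn
    · simp [extS, hb]
    · rw [extS_of_lt _ (by omega)]
      simp [show (2 * n - 1) % 2 = 1 by omega, show ¬ (2 * n - 1) / 2 < n - 1 by omega]

end phiMap

lemma mapsTo_phiMap (n : ℕ) :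
    Set.MapsTo (phiMap n) {s | isBilateral n s} {p | isCheckPair n p} := by
  intro s hs
  replace hs := (isBilateral_iff s).mp hs
  cases h : extS s (2 * n - 1)
  · exact Or.inl (by simpa [h] using hs)
  · exact Or.inr (by simpa [h] using hs)

lemma injOn_phiMap (n : ℕ) : Set.InjOn (phiMap n) {s | isBilateral n s} := by
  intro s hs t ht h
  replace hs := (isBilateral_iff s).mp hs
  replace ht := (isBilateral_iff t).mp ht
  refine eq_of_phiMap_eq h ?_
  rw [h] at hs
  have h_toNat : (extS s (2 * n - 1)).toNat = (extS t (2 * n - 1)).toNat := by omega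
  revert h_toNat
  cases extS s (2 * n - 1) <;> cases extS t (2 * n - 1) <;> simp

lemma surjOn_phiMap (n : ℕ) :
    Set.SurjOn (phiMap n) {s | isBilateral n s} {p | isCheckPair n p} := by
  intro p hp
  obtain ⟨s, hs, h_last⟩ := exists_phiMap_eq_and_extS_eq p (decide (ones p.1 ≠ ones p.2)) fun hn => by
    subst hn
    simp [ones, upsTo]
  refine ⟨s, (isBilateral_iff s).mpr ?_, hs⟩
  rw [hs, h_last]
  rcases hp with h | h <;> simp [h]

theorem stmt11 (n : ℕ) :
    Set.BijOn (phiMap n) {s | isBilateral n s} {p | isCheckPair n p} :=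
  ⟨mapsTo_phiMap n, injOn_phiMap n, surjOn_phiMap n⟩
end
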